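/- arXiv:1611.07541 — 2 statements merged into one kernel-verified Lean document; each statement's English description precedes it below -/
import Mathlib

section
/- Let M be a partial f-factor of G, I, O disjoint vertex sets, and C a connected component of G − I − O. Then 2·|E[C, C∪O] ∩ M| ≤ f(C) + |E[C,O]|, hence |E[C,C∪O] ∩ M| ≤ ⌊(f(C) + |E[C,O]|)/2⌋. -/
open scoped BigOperators symmDiff

structure Multigraph (V E : Type) where
  fst : E → V
  snd : E → V

namespace Multigraph

variable {V E : Type}

/-- Edges with both endpoints in `S`. -/
def gamma (G : Multigraph V E) (S : Set V) : Set E :=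
  {e | G.fst e ∈ S ∧ G.snd e ∈ S}

/-- Edges with exactly one endpoint in `S`. -/
def delta (G : Multigraph V E) (S : Set V) : Set E :=
  {e | Xor' (G.fst e ∈ S) (G.snd e ∈ S)}

/-- Edges with one endpoint in `A` and the other in `B`. -/
def between (G : Multigraph V E) (A B : Set V) : Set E :=
  {e | (G.fst e ∈ A ∧ G.snd e ∈ B) ∨ (G.fst e ∈ B ∧ G.snd e ∈ A)}

/-- Degree of `v` in the sub-multigraph `M` (loops count twice). -/
noncomputable def degOn (G : Multigraph V E) (M : Set E) (v : V) : ℕ :=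
  (M ∩ {e | G.fst e = v}).ncard + (M ∩ {e | G.snd e = v}).ncard

/-- A partial `f`-factor: a sub-multigraph with all degrees at most `f`. -/
def IsPartialFactor (G : Multigraph V E) (f : V → ℕ) (M : Set E) : Prop :=
  ∀ v, G.degOn M v ≤ f v

/-- `f(S) = Σ_{v∈S} f(v)`. -/
noncomputable def fSum (f : V → ℕ) (S : Set V) : ℕ := ∑ᶠ v ∈ S, f v

/-- Adjacency restricted to vertices in `W`. -/
def adjOff (G : Multigraph V E) (W : Set V) (u v : V) : Prop :=
  u ∈ W ∧ v ∈ W ∧ ∃ e, (G.fst e = u ∧ G.snd e = v) ∨ (G.fst e = v ∧ G.snd e = u)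

/-- `C` is a connected component of `G − I − O`. -/
def IsComponent (G : Multigraph V E) (I O : Set V) (C : Set V) : Prop :=
  ∃ x, x ∉ I ∪ O ∧ C = {y | Relation.ReflTransGen (G.adjOff (I ∪ O)ᶜ) x y}

end Multigraph

/-!
Count the edges of `X = E[C, C ∪ O] ∩ M` twice, once from each end. An edge of `X` whose first
end is not in `C` has its first end in `O` and its second end in `C`, so it lies in `E[C, O]`;
likewise for second ends. Since `C` and `O` are disjoint, no edge of `E[C, O]` is charged from
both ends, so `2|X|` is at most the number of (edge, end) incidences of `M` at `C` plus
`|E[C, O]|`, and the incidences at `C` number `Σ_{v ∈ C} deg_M v ≤ f(C)`.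
-/

open Multigraph

theorem Set.ncard_inter_preimage_eq_finsum {α β : Type*} {s : Set α} (hs : s.Finite)
    (g : α → β) {t : Set β} (ht : t.Finite) :
    (s ∩ g ⁻¹' t).ncard = ∑ᶠ b ∈ t, (s ∩ g ⁻¹' {b}).ncard := by
  have hfib : s ∩ g ⁻¹' t = ⋃ b ∈ t, s ∩ g ⁻¹' {b} := by ext; simp
  rw [hfib, ht.ncard_biUnion (fun _ _ ↦ hs.inter_of_left _)]
  exact fun b _ c _ hbc ↦ Set.disjoint_left.2 fun _ hb hc ↦ hbc (hb.2.symm.trans hc.2)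

namespace Multigraph

variable {V E : Type} (G : Multigraph V E)

theorem finsum_degOn_eq [Finite E] (M : Set E) {S : Set V} (hS : S.Finite) :
    ∑ᶠ v ∈ S, G.degOn M v = (M ∩ G.fst ⁻¹' S).ncard + (M ∩ G.snd ⁻¹' S).ncard := by
  rw [Set.ncard_inter_preimage_eq_finsum M.toFinite _ hS,
    Set.ncard_inter_preimage_eq_finsum M.toFinite _ hS, ← finsum_mem_add_distrib hS]
  rfl

theorem two_mul_ncard_between_inter_le [Finite E] (M : Set E) {C O : Set V}
    (hCO : Disjoint C O) :
    2 * (G.between C (C ∪ O) ∩ M).ncard ≤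
      (M ∩ G.fst ⁻¹' C).ncard + (M ∩ G.snd ⁻¹' C).ncard + (G.between C O).ncard := by
  set X := G.between C (C ∪ O) ∩ M
  set Y₁ := G.between C O ∩ G.fst ⁻¹' O
  set Y₂ := G.between C O ∩ G.snd ⁻¹' O
  have hX₁ : X ⊆ (M ∩ G.fst ⁻¹' C) ∪ Y₁ := by
    rintro e ⟨he | he, hM⟩
    · exact Or.inl ⟨hM, he.1⟩
    · rcases he.1 with h | h
      · exact Or.inl ⟨hM, h⟩
      · exact Or.inr ⟨Or.inr ⟨h, he.2⟩, h⟩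
  have hX₂ : X ⊆ (M ∩ G.snd ⁻¹' C) ∪ Y₂ := by
    rintro e ⟨he | he, hM⟩
    · rcases he.2 with h | h
      · exact Or.inl ⟨hM, h⟩
      · exact Or.inr ⟨Or.inl ⟨he.1, h⟩, h⟩
    · exact Or.inl ⟨hM, he.2⟩
  have hY : Y₁.ncard + Y₂.ncard ≤ (G.between C O).ncard := by
    have hdisj : Disjoint Y₁ Y₂ := by
      refine Set.disjoint_left.2 fun e ⟨he, h₁⟩ ⟨_, h₂⟩ ↦ ?_
      rcases he with he | he
      · exact hCO.notMem_of_mem_left he.1 h₁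
      · exact hCO.notMem_of_mem_left he.2 h₂
    rw [← Set.ncard_union_eq hdisj]
    exact Set.ncard_le_ncard (Set.union_subset Set.inter_subset_left Set.inter_subset_left)
  have h₁ := (Set.ncard_le_ncard hX₁).trans (Set.ncard_union_le _ _)
  have h₂ := (Set.ncard_le_ncard hX₂).trans (Set.ncard_union_le _ _)
  omega

variable {G}

theorem IsPartialFactor.ncard_inter_preimage_add_le [Finite E] {f : V → ℕ}
    {M : Set E} (hM : G.IsPartialFactor f M) {S : Set V} (hS : S.Finite) :
    (M ∩ G.fst ⁻¹' S).ncard + (M ∩ G.snd ⁻¹' S).ncard ≤ fSum f S := by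
  rw [← G.finsum_degOn_eq M hS, fSum, finsum_mem_eq_finite_toFinset_sum _ hS,
    finsum_mem_eq_finite_toFinset_sum _ hS]
  exact Finset.sum_le_sum fun v _ ↦ hM v

theorem IsComponent.disjoint_right {I O C : Set V}
    (hC : G.IsComponent I O C) : Disjoint C O := by
  obtain ⟨x, hx, rfl⟩ := hC
  refine Set.disjoint_left.2 fun y hy hyO ↦ ?_
  rcases hy.cases_tail with rfl | ⟨_, _, hadj⟩
  · exact hx (Or.inr hyO)
  · exact hadj.2.1 (Or.inr hyO)

end Multigraph

theorem stmt3_general {V E : Type} [Fintype V] [Fintype E]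
    (G : Multigraph V E) (f : V → ℕ) (M : Set E) (I O : Set V)
    (hM : G.IsPartialFactor f M) (C : Set V)
    (hC : G.IsComponent I O C) :
    2 * ((G.between C (C ∪ O)) ∩ M).ncard ≤ fSum f C + (G.between C O).ncard ∧
    ((G.between C (C ∪ O)) ∩ M).ncard ≤ (fSum f C + (G.between C O).ncard) / 2 := by
  have hends := hM.ncard_inter_preimage_add_le C.toFinite
  have hdouble := G.two_mul_ncard_between_inter_le M hC.disjoint_right
  have key : 2 * (G.between C (C ∪ O) ∩ M).ncard ≤ fSum f C + (G.between C O).ncard := by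
    omega
  exact ⟨key, (Nat.le_div_iff_mul_le two_pos).2 (by omega)⟩

theorem stmt3 {V E : Type} [Fintype V] [Fintype E]
    (G : Multigraph V E) (f : V → ℕ) (M : Set E) (I O : Set V)
    (hM : G.IsPartialFactor f M) (hIO : Disjoint I O) (C : Set V)
    (hC : G.IsComponent I O C) :
    2 * ((G.between C (C ∪ O)) ∩ M).ncard ≤ fSum f C + (G.between C O).ncard ∧
    ((G.between C (C ∪ O)) ∩ M).ncard ≤ (fSum f C + (G.between C O).ncard) / 2 :=
  stmt3_general G f M I O hM C hC
end

section
/- Let C be a connected component of G − I − O such that exactly one vertex of C is 'free' (deg_M = f − 1) or one extra matched edge e leaves C to I, with E[C,O] ⊆ M up to the single exceptional edge e. Then 2|E[C,C∪O] ∩ M| = f(C) + |E[C,O]| − 1, and hence |E[C,C∪O] ∩ M| = ⌊(f(C)+|E[C,O]|)/2⌋. -/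
open scoped BigOperators symmDiff

open Multigraph

/-! Summing `deg_M` over `C` counts each matched edge inside `C` twice and each matched edge of
`δ(C)` once. Since `C` is a component of `G − I − O`, `δ(C) = E[C,I] ∪ E[C,O]`, so
`f(C) + |E[C,O]| = 2 |E[C,C∪O] ∩ M| + a + b + c`, where `a = f(C) − deg_M(C)`,
`b = |E[C,I] ∩ M|` and `c = |E[C,O] \ M|`; in each of the three cases exactly one of `a, b, c`
is `1` and the others vanish. -/

lemma finsum_mem_eq_add_one_of_eq_add_one {α : Type*} {S : Set α} (hS : S.Finite)
    {g h : α → ℕ} {v : α} (hv : v ∈ S) (hgv : h v = g v + 1)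
    (hg : ∀ x ∈ S, x ≠ v → h x = g x) :
    ∑ᶠ x ∈ S, h x = ∑ᶠ x ∈ S, g x + 1 := by
  have hnot : v ∉ S \ {v} := fun h => h.2 rfl
  rw [← Set.insert_sdiff_self_of_mem hv, finsum_mem_insert _ hnot (hS.sdiff),
    finsum_mem_insert _ hnot (hS.sdiff), hgv,
    finsum_mem_congr rfl fun x hx => hg x hx.1 hx.2]
  ring

namespace Multigraph

variable {V E : Type} (G : Multigraph V E)

lemma between_self (S : Set V) : G.between S S = G.gamma S := by
  ext e
  simp only [between, gamma, Set.mem_ofPred_eq, or_self]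

lemma between_union_right (A B B' : Set V) :
    G.between A (B ∪ B') = G.between A B ∪ G.between A B' := by
  ext e
  simp only [between, Set.mem_union, Set.mem_ofPred_eq]
  tauto

lemma disjoint_gamma_between {A B : Set V} (h : Disjoint A B) :
    Disjoint (G.gamma A) (G.between A B) := by
  rw [Set.disjoint_left]
  rintro e ⟨h₁, h₂⟩ (⟨-, hB⟩ | ⟨hB, -⟩)
  · exact Set.disjoint_left.1 h h₂ hB
  · exact Set.disjoint_left.1 h h₁ hB

lemma disjoint_between_between {A B B' : Set V} (hB : Disjoint A B) (hB' : Disjoint A B')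
    (hBB' : Disjoint B B') : Disjoint (G.between A B) (G.between A B') := by
  rw [Set.disjoint_left]
  rintro e (⟨h₁, h₂⟩ | ⟨h₁, h₂⟩) (⟨h₃, h₄⟩ | ⟨h₃, h₄⟩)
  · exact Set.disjoint_left.1 hBB' h₂ h₄
  · exact Set.disjoint_left.1 hB' h₁ h₃
  · exact Set.disjoint_left.1 hB h₃ h₁
  · exact Set.disjoint_left.1 hBB' h₁ h₃

lemma ncard_inter_preimage_eq_finsum [Finite E] (M : Set E) (g : E → V) {S : Set V}
    (hS : S.Finite) : (M ∩ g ⁻¹' S).ncard = ∑ᶠ v ∈ S, (M ∩ {e | g e = v}).ncard := by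
  rw [← hS.ncard_biUnion (fun _ _ => Set.toFinite _)]
  · congr 1
    ext e
    simp
  · intro a _ b _ hab
    exact Set.disjoint_left.2 fun e h₁ h₂ => hab (h₁.2.symm.trans h₂.2)

lemma finsum_degOn [Finite E] (M : Set E) {S : Set V} (hS : S.Finite) :
    ∑ᶠ v ∈ S, G.degOn M v = 2 * (G.gamma S ∩ M).ncard + (G.delta S ∩ M).ncard := by
  set A := M ∩ G.fst ⁻¹' S
  set B := M ∩ G.snd ⁻¹' S
  have hsum : ∑ᶠ v ∈ S, G.degOn M v = A.ncard + B.ncard := by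
    rw [ncard_inter_preimage_eq_finsum M G.fst hS, ncard_inter_preimage_eq_finsum M G.snd hS,
      ← finsum_mem_add_distrib hS]
    rfl
  have hinter : A ∩ B = G.gamma S ∩ M := by
    ext e
    simp only [A, B, gamma, Set.mem_inter_iff, Set.mem_preimage, Set.mem_ofPred_eq]
    tauto
  have hdiff : A \ B ∪ B \ A = G.delta S ∩ M := by
    ext e
    constructor
    · rintro (⟨⟨hM, h₁⟩, h₂⟩ | ⟨⟨hM, h₂⟩, h₁⟩)
      · exact ⟨Or.inl ⟨h₁, fun h => h₂ ⟨hM, h⟩⟩, hM⟩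
      · exact ⟨Or.inr ⟨h₂, fun h => h₁ ⟨hM, h⟩⟩, hM⟩
    · rintro ⟨⟨h₁, h₂⟩ | ⟨h₂, h₁⟩, hM⟩
      · exact Or.inl ⟨⟨hM, h₁⟩, fun h => h₂ h.2⟩
      · exact Or.inr ⟨⟨hM, h₂⟩, fun h => h₁ h.2⟩
  have hA := Set.ncard_inter_add_ncard_sdiff_eq_ncard A B (Set.toFinite _)
  have hB := Set.ncard_inter_add_ncard_sdiff_eq_ncard B A (Set.toFinite _)
  rw [Set.inter_comm, hinter] at hB
  rw [hinter] at hA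
  rw [hsum, ← hdiff, Set.ncard_union_eq disjoint_sdiff_sdiff (Set.toFinite _) (Set.toFinite _)]
  omega

section Component

variable {G} {I O C : Set V}

lemma IsComponent.disjoint (hC : G.IsComponent I O C) : Disjoint C (I ∪ O) := by
  obtain ⟨x, hx, rfl⟩ := hC
  refine Set.disjoint_left.2 fun y hy => ?_
  induction hy with
  | refl => exact hx
  | tail _ hadj _ => exact hadj.2.1

lemma IsComponent.mem_of_adjOff (hC : G.IsComponent I O C) {u v : V} (hu : u ∈ C)
    (huv : G.adjOff (I ∪ O)ᶜ u v) : v ∈ C := by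
  obtain ⟨x, -, rfl⟩ := hC
  exact Relation.ReflTransGen.tail hu huv

lemma IsComponent.delta_eq (hC : G.IsComponent I O C) : G.delta C = G.between C (I ∪ O) := by
  have hdisj := hC.disjoint
  ext e
  constructor
  · rintro (⟨h₁, h₂⟩ | ⟨h₂, h₁⟩)
    · refine Or.inl ⟨h₁, not_not.1 fun h => h₂ (hC.mem_of_adjOff h₁ ?_)⟩
      exact ⟨Set.disjoint_left.1 hdisj h₁, h, e, Or.inl ⟨rfl, rfl⟩⟩
    · refine Or.inr ⟨not_not.1 fun h => h₁ (hC.mem_of_adjOff h₂ ?_), h₂⟩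
      exact ⟨Set.disjoint_left.1 hdisj h₂, h, e, Or.inr ⟨rfl, rfl⟩⟩
  · rintro (⟨h₁, h₂⟩ | ⟨h₁, h₂⟩)
    · exact Or.inl ⟨h₁, fun h => Set.disjoint_left.1 hdisj h h₂⟩
    · exact Or.inr ⟨h₂, fun h => Set.disjoint_left.1 hdisj h h₁⟩

end Component

end Multigraph

theorem stmt12_general {V E : Type} [Fintype V] [Fintype E]
    (G : Multigraph V E) (f : V → ℕ) (M : Set E)
    (I O : Set V) (hIO : Disjoint I O)
    (C : Set V) (hC : G.IsComponent I O C)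
    (hcase :
      (∃ v ∈ C, G.degOn M v + 1 = f v ∧ (∀ x ∈ C, x ≠ v → G.degOn M x = f x) ∧
        G.between C I ∩ M = ∅ ∧ G.between C O ⊆ M) ∨
      ((∀ x ∈ C, G.degOn M x = f x) ∧ (∃ e : E, G.between C I ∩ M = {e}) ∧
        G.between C O ⊆ M) ∨
      ((∀ x ∈ C, G.degOn M x = f x) ∧ G.between C I ∩ M = ∅ ∧
        ∃ e : E, G.between C O \ M = {e})) :
    2 * ((G.between C (C ∪ O)) ∩ M).ncard + 1 = fSum f C + (G.between C O).ncard ∧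
    ((G.between C (C ∪ O)) ∩ M).ncard = (fSum f C + (G.between C O).ncard) / 2 := by
  have hCI : Disjoint C I := hC.disjoint.mono_right Set.subset_union_left
  have hCO : Disjoint C O := hC.disjoint.mono_right Set.subset_union_right
  have hmatched : (G.between C (C ∪ O) ∩ M).ncard =
      (G.gamma C ∩ M).ncard + (G.between C O ∩ M).ncard := by
    rw [between_union_right, between_self, Set.union_inter_distrib_right,
      Set.ncard_union_eq (Disjoint.inter_left _ ((G.disjoint_gamma_between hCO).inter_right _))]
  have hboundary : (G.delta C ∩ M).ncard =
      (G.between C I ∩ M).ncard + (G.between C O ∩ M).ncard := by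
    rw [hC.delta_eq, between_union_right, Set.union_inter_distrib_right,
      Set.ncard_union_eq (Disjoint.inter_left _
        ((G.disjoint_between_between hCI hCO hIO).inter_right _))]
  have hdeg := G.finsum_degOn M (Set.toFinite C)
  have hO := Set.ncard_inter_add_ncard_sdiff_eq_ncard (G.between C O) M (Set.toFinite _)
  obtain ⟨a, b, c, hfa, hb, hc, habc⟩ : ∃ a b c, fSum f C = ∑ᶠ v ∈ C, G.degOn M v + a ∧
      (G.between C I ∩ M).ncard = b ∧ (G.between C O \ M).ncard = c ∧ a + b + c = 1 := by
    rcases hcase with ⟨v, hv, hfv, hfull, hI, hOM⟩ | ⟨hfull, ⟨e, hI⟩, hOM⟩ |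
      ⟨hfull, hI, e, hOM⟩
    · exact ⟨1, 0, 0, finsum_mem_eq_add_one_of_eq_add_one (Set.toFinite C) hv hfv.symm
        fun x hx hxv => (hfull x hx hxv).symm, by simp [hI], by simp [Set.sdiff_eq_empty.2 hOM],
        rfl⟩
    · exact ⟨0, 1, 0, finsum_mem_congr rfl fun x hx => (hfull x hx).symm, by simp [hI],
        by simp [Set.sdiff_eq_empty.2 hOM], rfl⟩
    · exact ⟨0, 0, 1, finsum_mem_congr rfl fun x hx => (hfull x hx).symm, by simp [hI],
        by simp [hOM], rfl⟩
  omega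

theorem stmt12 {V E : Type} [Fintype V] [Fintype E]
    (G : Multigraph V E) (f : V → ℕ) (M : Set E)
    (hM : G.IsPartialFactor f M) (I O : Set V) (hIO : Disjoint I O)
    (C : Set V) (hC : G.IsComponent I O C)
    (hcase :
      (∃ v ∈ C, G.degOn M v + 1 = f v ∧ (∀ x ∈ C, x ≠ v → G.degOn M x = f x) ∧
        G.between C I ∩ M = ∅ ∧ G.between C O ⊆ M) ∨
      ((∀ x ∈ C, G.degOn M x = f x) ∧ (∃ e : E, G.between C I ∩ M = {e}) ∧
        G.between C O ⊆ M) ∨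
      ((∀ x ∈ C, G.degOn M x = f x) ∧ G.between C I ∩ M = ∅ ∧
        ∃ e : E, G.between C O \ M = {e})) :
    2 * ((G.between C (C ∪ O)) ∩ M).ncard + 1 = fSum f C + (G.between C O).ncard ∧
    ((G.between C (C ∪ O)) ∩ M).ncard = (fSum f C + (G.between C O).ncard) / 2 :=
  stmt12_general G f M I O hIO C hC hcase
end
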